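/- (Difference equation for q-Genocchi polynomials.) For every integer n ≥ 1 and all x ∈ ℂ: G_{n,q}(x,1) + G_{n,q}(x) = 2 ((−1;q)_{n−1}/2^{n−1}) [n]_q x^{n−1}. -/

import Mathlib

open Finset PowerSeries

/-- The `q`-number `[n]_q = (1 - q^n)/(1 - q)`. -/
noncomputable def qNum (q : ℂ) (n : ℕ) : ℂ := (1 - q ^ n) / (1 - q)

/-- The `q`-factorial `[n]_q!`. -/
noncomputable def qFact (q : ℂ) : ℕ → ℂ
  | 0 => 1
  | n + 1 => qNum q (n + 1) * qFact q n

/-- The `q`-shifted factorial `(a; q)_n = ∏_{j=0}^{n-1} (1 - q^j a)`. -/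
noncomputable def qShift (a q : ℂ) (n : ℕ) : ℂ := ∏ j ∈ Finset.range n, (1 - q ^ j * a)

/-- The Gaussian binomial coefficient `[n choose k]_q = (q;q)_n / ((q;q)_{n-k} (q;q)_k)`. -/
noncomputable def qBinom (q : ℂ) (n k : ℕ) : ℂ :=
  qShift q q n / (qShift q q (n - k) * qShift q q k)

/-- The formal power series (in `t`) `𝓔_q(tx) = Σ_{n≥0} (-1;q)_n (x)^n t^n / (2^n [n]_q!)`. -/
noncomputable def qExp (q x : ℂ) : PowerSeries ℂ :=
  PowerSeries.mk fun n => qShift (-1) q n * x ^ n / (2 ^ n * qFact q n)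

/-- The generating series `Σ_{n≥0} a_n t^n / [n]_q!` of a sequence `a`. -/
noncomputable def qGen (q : ℂ) (a : ℕ → ℂ) : PowerSeries ℂ :=
  PowerSeries.mk fun n => a n / qFact q n

/-- The `q`-addition `(x ⊕_q y)^n`. -/
noncomputable def qAdd (q x y : ℂ) (n : ℕ) : ℂ :=
  ∑ k ∈ Finset.range (n + 1),
    qBinom q n k * (qShift (-1) q k * qShift (-1) q (n - k) / 2 ^ n) * x ^ k * y ^ (n - k)

/-!
Put `x = 0` in the generating function and add it to the one at `y = 1`: since `𝓔_q(0) = 1`,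
the right-hand sides sum to `2t 𝓔_q(tx) (𝓔_q(t) + 1)`, and cancelling the unit factor
`𝓔_q(t) + 1` leaves `Σ (G_{n,q}(x,1) + G_{n,q}(x)) tⁿ/[n]_q! = 2t 𝓔_q(tx)`. Comparing
coefficients of `tⁿ` uses `[n]_q! = [n]_q [n-1]_q!`.
-/

lemma qNum_ne_zero {q : ℂ} (hq1 : ‖q‖ < 1) {k : ℕ} (hk : k ≠ 0) : qNum q k ≠ 0 := by
  have hqk : ‖q ^ k‖ < 1 := by rw [norm_pow]; exact pow_lt_one₀ (norm_nonneg q) hq1 hk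
  have hq : ‖q‖ ≠ ‖(1 : ℂ)‖ := by rw [norm_one]; exact hq1.ne
  have hqk' : ‖q ^ k‖ ≠ ‖(1 : ℂ)‖ := by rw [norm_one]; exact hqk.ne
  exact div_ne_zero (sub_ne_zero.2 fun h => hqk' (congrArg norm h).symm)
    (sub_ne_zero.2 fun h => hq (congrArg norm h).symm)

lemma qFact_ne_zero {q : ℂ} (hq1 : ‖q‖ < 1) (n : ℕ) : qFact q n ≠ 0 := by
  induction n with
  | zero => simp [qFact]
  | succ m ih => exact mul_ne_zero (qNum_ne_zero hq1 m.succ_ne_zero) ih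

lemma qGen_injective {q : ℂ} (hq1 : ‖q‖ < 1) : Function.Injective (qGen q) := by
  intro a b h
  funext n
  have hn := congrArg (coeff n) h
  simp only [qGen, coeff_mk] at hn
  exact (div_left_inj' (qFact_ne_zero hq1 n)).1 hn

lemma qGen_add (q : ℂ) (a b : ℕ → ℂ) : qGen q a + qGen q b = qGen q (a + b) := by
  ext n
  simp [qGen, add_div]

lemma constantCoeff_qExp (q x : ℂ) : constantCoeff (qExp q x) = 1 := by
  simp [qExp, ← coeff_zero_eq_constantCoeff_apply, qShift, qFact]

lemma qExp_zero (q : ℂ) : qExp q 0 = 1 := by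
  ext n
  cases n with
  | zero => simpa using constantCoeff_qExp q 0
  | succ m => simp [qExp]

/-- At `n = 0` both sides vanish, because `[0]_q = 0`. -/
lemma two_mul_X_mul_qExp {q : ℂ} (hq1 : ‖q‖ < 1) (x : ℂ) :
    2 * X * qExp q x =
      qGen q fun n => 2 * (qShift (-1) q (n - 1) / 2 ^ (n - 1)) * qNum q n * x ^ (n - 1) := by
  ext n
  cases n with
  | zero => simp [qGen, qNum]
  | succ m =>
    have hFm := qFact_ne_zero hq1 m
    have hNm := qNum_ne_zero hq1 m.succ_ne_zero
    rw [show (2 : PowerSeries ℂ) * X * qExp q x = X * (C (2 : ℂ) * qExp q x) by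
      rw [map_ofNat]; ring]
    simp only [coeff_succ_X_mul, coeff_C_mul, qExp, qGen, coeff_mk, qFact, Nat.add_sub_cancel]
    field_simp

theorem qGenocchi_difference_general (q : ℂ) (hq1 : ‖q‖ < 1)
    (G : ℂ → ℂ → ℕ → ℂ)
    (hG : ∀ x y : ℂ, qGen q (G x y) * (qExp q 1 + 1) = 2 * PowerSeries.X * qExp q x * qExp q y)
    (n : ℕ) (x : ℂ) :
    G x 1 n + G x 0 n = 2 * (qShift (-1) q (n - 1) / 2 ^ (n - 1)) * qNum q n * x ^ (n - 1) := by
  have hunit : qExp q 1 + 1 ≠ 0 := fun h => by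
    simpa [constantCoeff_qExp] using congrArg constantCoeff h
  have hsum : qGen q (G x 1) + qGen q (G x 0) = 2 * X * qExp q x :=
    mul_right_cancel₀ hunit (by rw [add_mul, hG, hG, qExp_zero]; ring)
  rw [qGen_add, two_mul_X_mul_qExp hq1] at hsum
  exact congrFun (qGen_injective hq1 hsum) n

/-- Difference equation for the `q`-Genocchi polynomials:
`G_{n,q}(x,1) + G_{n,q}(x) = 2((-1;q)_{n-1}/2^{n-1}) [n]_q x^{n-1}` for `n ≥ 1`. -/
theorem qGenocchi_difference (q : ℂ) (hq0 : 0 < ‖q‖) (hq1 : ‖q‖ < 1)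
    (G : ℂ → ℂ → ℕ → ℂ)
    (hG : ∀ x y : ℂ, qGen q (G x y) * (qExp q 1 + 1) = 2 * PowerSeries.X * qExp q x * qExp q y)
    (n : ℕ) (hn : 1 ≤ n) (x : ℂ) :
    G x 1 n + G x 0 n = 2 * (qShift (-1) q (n - 1) / 2 ^ (n - 1)) * qNum q n * x ^ (n - 1) :=
  qGenocchi_difference_general q hq1 G hG n x
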